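/- arXiv:1604.00310 — 5 statements merged into one kernel-verified Lean document; each statement's English description precedes it below -/
import Mathlib

section
/- Let a 2-CS-PIP instance with profits c_e ≥ 0 be given and let x be a fractional solution whose support { e ∈ E : x_e > 0 } is acyclic (forms a forest). Then there exists an integral solution M with Σ_{e ∈ M} c_e ≥ (1/2) Σ_{e ∈ E} c_e x_e. -/
/-!
Induction on the forest. The second vertex `v` of a longest path carries a nonempty set `S` of
pendant edges (edges to leaves) and at most one further edge `ep`. Restricted to `S`, the LP is a
fractional knapsack at `v` of capacity `b v - d ep v * x ep`. Uncrossing leaves at most one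
fractional item, so its value is at most `(2 - x ep) V₁ + x ep V₂`, where `V₁` and `V₂` are the
best integral knapsack values for the capacities `b v` and `b v - d ep v` (no-clipping makes every
single item feasible). Delete `S`, lower the profit of `ep` by `V₁ - V₂` (but not below zero),
round the rest by induction and add the best knapsack for the capacity left at `v`; the leaves of
`S` lie on no other edge, so no-clipping also keeps their constraints.
-/

open Finset SimpleGraph

namespace Knapsack

variable {ι : Type*}

noncomputable def fractionalIndices (S : Finset ι) (y : ι → ℝ) : Finset ι :=
  {i ∈ S | y i ∈ Set.Ioo 0 1}

lemma fractionalIndices_ssubset {S : Finset ι} {x y : ι → ℝ} {i j : ι}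
    (hi : i ∈ fractionalIndices S x) (hj : j ∈ fractionalIndices S x)
    (hxy : ∀ k, k ≠ i → k ≠ j → y k = x k) (hy : y i = 1 ∨ y j = 0) :
    fractionalIndices S y ⊂ fractionalIndices S x := by
  have hsub : fractionalIndices S y ⊆ fractionalIndices S x := fun k hk => by
    by_cases hki : k = i
    · exact hki ▸ hi
    by_cases hkj : k = j
    · exact hkj ▸ hj
    simpa only [fractionalIndices, mem_filter, hxy k hki hkj] using hk
  refine (ssubset_iff_of_subset hsub).2 ?_
  rcases hy with hy | hy
  · exact ⟨i, hi, by simp [fractionalIndices, hy]⟩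
  · exact ⟨j, hj, by simp [fractionalIndices, hy]⟩

lemma exists_card_fractionalIndices_lt [DecidableEq ι] {S : Finset ι} {w c x : ι → ℝ}
    (hx : ∀ k ∈ S, x k ∈ Set.Icc 0 1) {i j : ι} (hi : i ∈ fractionalIndices S x)
    (hj : j ∈ fractionalIndices S x) (hij : i ≠ j) (hwi : 0 < w i) (hwj : 0 < w j)
    (hratio : c j / w j ≤ c i / w i) :
    ∃ y : ι → ℝ, (∀ k ∈ S, y k ∈ Set.Icc 0 1) ∧
      ∑ k ∈ S, w k * y k = ∑ k ∈ S, w k * x k ∧ ∑ k ∈ S, c k * x k ≤ ∑ k ∈ S, c k * y k ∧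
      (fractionalIndices S y).card < (fractionalIndices S x).card := by
  obtain ⟨hiS, hi0, hi1⟩ := mem_filter.1 hi
  obtain ⟨hjS, hj0, hj1⟩ := mem_filter.1 hj
  -- move `t` units of capacity from `j` to `i` until `i` is full or `j` is empty
  set t := min ((1 - x i) * w i) (x j * w j) with ht
  have ht0 : 0 < t := lt_min (by nlinarith) (by nlinarith)
  set y : ι → ℝ := fun k => x k + (if k = i then t / w i else 0) - (if k = j then t / w j else 0)
  have hyi : y i = x i + t / w i := by simp [y, hij]
  have hyj : y j = x j - t / w j := by simp [y, hij.symm]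
  have hyk : ∀ k, k ≠ i → k ≠ j → y k = x k := fun k hki hkj => by simp [y, hki, hkj]
  have hsum : ∀ f : ι → ℝ, ∑ k ∈ S, f k * y k
      = ∑ k ∈ S, f k * x k + f i * (t / w i) - f j * (t / w j) := fun f => by
    simp [y, mul_add, mul_sub, sum_add_distrib, sum_sub_distrib, hiS, hjS]
  have hti : t / w i ≤ 1 - x i := (div_le_iff₀ hwi).2 (min_le_left _ _)
  have htj : t / w j ≤ x j := (div_le_iff₀ hwj).2 (min_le_right _ _)
  have hti0 : 0 < t / w i := div_pos ht0 hwi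
  have htj0 : 0 < t / w j := div_pos ht0 hwj
  refine ⟨y, fun k hk => ?_, ?_, ?_, card_lt_card (fractionalIndices_ssubset hi hj hyk ?_)⟩
  · by_cases hki : k = i
    · subst hki; rw [hyi]; constructor <;> linarith
    by_cases hkj : k = j
    · subst hkj; rw [hyj]; constructor <;> linarith
    rw [hyk k hki hkj]; exact hx k hk
  · rw [hsum, mul_div_cancel₀ _ hwi.ne', mul_div_cancel₀ _ hwj.ne']; ring
  · have : c j * (t / w j) ≤ c i * (t / w i) := by
      rw [mul_div_left_comm, mul_div_left_comm (c i)]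
      exact mul_le_mul_of_nonneg_left hratio ht0.le
    rw [hsum]; linarith
  · rcases min_choice ((1 - x i) * w i) (x j * w j) with h | h
    · left; rw [hyi, ht, h, mul_div_cancel_right₀ _ hwi.ne']; ring
    · right; rw [hyj, ht, h, mul_div_cancel_right₀ _ hwj.ne']; ring

lemma exists_card_fractionalIndices_le_one [DecidableEq ι] (S : Finset ι) (w c : ι → ℝ)
    (hw : ∀ i ∈ S, 0 < w i) (x : ι → ℝ) (hx : ∀ i ∈ S, x i ∈ Set.Icc 0 1) :
    ∃ y : ι → ℝ, (∀ i ∈ S, y i ∈ Set.Icc 0 1) ∧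
      ∑ i ∈ S, w i * y i = ∑ i ∈ S, w i * x i ∧ ∑ i ∈ S, c i * x i ≤ ∑ i ∈ S, c i * y i ∧
      (fractionalIndices S y).card ≤ 1 := by
  induction hn : (fractionalIndices S x).card using Nat.strong_induction_on generalizing x with
  | _ n ih =>
  by_cases hle : n ≤ 1
  · exact ⟨x, hx, rfl, le_rfl, hn ▸ hle⟩
  obtain ⟨i, hi, j, hj, hij⟩ := one_lt_card.1 (hn ▸ not_le.1 hle)
  wlog hratio : c j / w j ≤ c i / w i generalizing i j
  · exact this j hj i hi hij.symm (le_of_not_ge hratio)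
  obtain ⟨y, hy, hwy, hcy, hlt⟩ := exists_card_fractionalIndices_lt hx hi hj hij
    (hw i (mem_filter.1 hi).1) (hw j (mem_filter.1 hj).1) hratio
  obtain ⟨z, hz, hwz, hcz, hcard⟩ := ih _ (hn ▸ hlt) y hy rfl
  exact ⟨z, hz, hwz.trans hwy, hcy.trans hcz, hcard⟩

lemma sum_mul_eq_sum_add_sum_fractionalIndices (S : Finset ι) (f y : ι → ℝ)
    (hy : ∀ i ∈ S, y i ∈ Set.Icc 0 1) :
    ∑ i ∈ S, f i * y i = ∑ i ∈ S with y i = 1, f i + ∑ i ∈ fractionalIndices S y, f i * y i := by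
  rw [fractionalIndices, sum_filter, sum_filter, ← sum_add_distrib]
  refine sum_congr rfl fun i hi => ?_
  obtain ⟨h0, h1⟩ := hy i hi
  rcases h0.eq_or_lt with h0 | h0
  · simp [← h0]
  rcases h1.eq_or_lt with h1 | h1
  · simp [h1]
  · simp [h0, h1, h1.ne]

lemma add_mul_le_of_bounds {B p ξ θ wA wg cA cg V₁ V₂ : ℝ} (hp : 0 ≤ p)
    (hξ : ξ ∈ Set.Icc 0 1) (hθ : θ ∈ Set.Icc 0 1) (hwg : 0 < wg) (hcg : 0 ≤ cg)
    (hcap : wA + wg * θ + p * ξ ≤ B) (hV₂ : 0 ≤ V₂) (hV : V₂ ≤ V₁)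
    (hA₁ : wA ≤ B → cA ≤ V₁) (hA₂ : wA ≤ B - p → cA ≤ V₂) (hg₁ : cg ≤ V₁)
    (hg₂ : wg ≤ B - p → cg ≤ V₂) (hAg : wA + wg ≤ B → cA + cg ≤ V₁) :
    cA + cg * θ ≤ (2 - ξ) * V₁ + ξ * V₂ := by
  obtain ⟨hξ0, hξ1⟩ := hξ
  obtain ⟨hθ0, hθ1⟩ := hθ
  have hθcg : cg * θ ≤ cg := mul_le_of_le_one_right hcg hθ1
  have hA : cA ≤ V₁ := hA₁ (by nlinarith)
  by_cases h₁ : wA ≤ B - p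
  · nlinarith [hA₂ h₁]
  by_cases h₂ : wg ≤ B - p
  · nlinarith [hg₂ h₂]
  by_cases h₃ : wA + wg ≤ B
  · nlinarith [hAg h₃]
  -- neither `A` nor `g` fits into `B - p`, and not both into `B`: this caps `θ` at `1 - ξ`
  have hθξ : θ ≤ 1 - ξ := by
    by_contra! h
    rcases le_total p wg with h' | h' <;> nlinarith
  nlinarith

lemma sum_mul_le_of_bounds [DecidableEq ι] {S : Finset ι} {w c x : ι → ℝ}
    {B p ξ V₁ V₂ : ℝ} (hw : ∀ i ∈ S, 0 < w i) (hwB : ∀ i ∈ S, w i ≤ B) (hc : ∀ i ∈ S, 0 ≤ c i)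
    (hx : ∀ i ∈ S, x i ∈ Set.Icc 0 1) (hp : 0 ≤ p) (hpB : p ≤ B) (hξ : ξ ∈ Set.Icc 0 1)
    (hcap : ∑ i ∈ S, w i * x i + p * ξ ≤ B) (hV : V₂ ≤ V₁)
    (hV₁ : ∀ A ⊆ S, ∑ i ∈ A, w i ≤ B → ∑ i ∈ A, c i ≤ V₁)
    (hV₂ : ∀ A ⊆ S, ∑ i ∈ A, w i ≤ B - p → ∑ i ∈ A, c i ≤ V₂) :
    ∑ i ∈ S, c i * x i ≤ (2 - ξ) * V₁ + ξ * V₂ := by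
  obtain ⟨y, hy, hwy, hcy, hcard⟩ := exists_card_fractionalIndices_le_one S w c hw x hx
  have hV₂0 : 0 ≤ V₂ := by simpa using hV₂ ∅ (empty_subset S) (by simpa using hpB)
  have hpξ : 0 ≤ p * ξ := mul_nonneg hp hξ.1
  set A := {i ∈ S | y i = 1}
  have hAS : A ⊆ S := filter_subset _ S
  rw [sum_mul_eq_sum_add_sum_fractionalIndices S w y hy] at hwy
  rw [sum_mul_eq_sum_add_sum_fractionalIndices S c y hy] at hcy
  rcases Nat.le_one_iff_eq_zero_or_eq_one.1 hcard with h | h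
  · rw [card_eq_zero.1 h, sum_empty, add_zero] at hwy hcy
    have := hV₁ A hAS (by linarith)
    nlinarith [hξ.1, hξ.2]
  obtain ⟨g, hg⟩ := card_eq_one.1 h
  have hgS : g ∈ S ∧ y g ∈ Set.Ioo 0 1 := mem_filter.1 (hg ▸ mem_singleton_self g)
  have hgA : g ∉ A := fun hgA => (mem_filter.1 hgA).2 ▸ hgS.2.2 |>.false
  rw [hg, sum_singleton] at hwy hcy
  refine hcy.trans (add_mul_le_of_bounds hp hξ (Set.Ioo_subset_Icc_self hgS.2)
    (hw g hgS.1) (hc g hgS.1) (by linarith) hV₂0 hV (hV₁ A hAS) (hV₂ A hAS) ?_ ?_ ?_)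
  · simpa using hV₁ {g} (by simpa using hgS.1) (by simpa using hwB g hgS.1)
  · exact fun h => by simpa using hV₂ {g} (by simpa using hgS.1) (by simpa using h)
  · intro h
    have := hV₁ (insert g A) (insert_subset hgS.1 hAS) (by rw [sum_insert hgA]; linarith)
    rwa [sum_insert hgA, add_comm] at this

lemma exists_subset_forall_sum_le (S : Finset ι) (w c : ι → ℝ) {B : ℝ} (hB : 0 ≤ B) :
    ∃ A ⊆ S, ∑ i ∈ A, w i ≤ B ∧
      ∀ A' ⊆ S, ∑ i ∈ A', w i ≤ B → ∑ i ∈ A', c i ≤ ∑ i ∈ A, c i := by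
  obtain ⟨A, hA, hmax⟩ := exists_max_image {A ∈ S.powerset | ∑ i ∈ A, w i ≤ B}
    (fun A => ∑ i ∈ A, c i) ⟨∅, by simpa using hB⟩
  simp only [mem_filter, mem_powerset] at hA hmax
  exact ⟨A, hA.1, hA.2, fun A' hA' hw => hmax A' ⟨hA', hw⟩⟩

lemma exists_optimal_pair [DecidableEq ι] {S : Finset ι} {w c x : ι → ℝ} {B p ξ : ℝ}
    (hw : ∀ i ∈ S, 0 < w i) (hwB : ∀ i ∈ S, w i ≤ B) (hc : ∀ i ∈ S, 0 ≤ c i)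
    (hx : ∀ i ∈ S, x i ∈ Set.Icc 0 1) (hp : 0 ≤ p) (hpB : p ≤ B) (hξ : ξ ∈ Set.Icc 0 1)
    (hcap : ∑ i ∈ S, w i * x i + p * ξ ≤ B) :
    ∃ A₁ ⊆ S, ∃ A₂ ⊆ S, ∑ i ∈ A₁, w i ≤ B ∧ ∑ i ∈ A₂, w i ≤ B - p ∧
      ∑ i ∈ A₂, c i ≤ ∑ i ∈ A₁, c i ∧
      ∑ i ∈ S, c i * x i ≤ (2 - ξ) * ∑ i ∈ A₁, c i + ξ * ∑ i ∈ A₂, c i := by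
  obtain ⟨A₁, hA₁, hwA₁, hmax₁⟩ := exists_subset_forall_sum_le S w c (hp.trans hpB)
  obtain ⟨A₂, hA₂, hwA₂, hmax₂⟩ := exists_subset_forall_sum_le S w c (sub_nonneg.2 hpB)
  have hA₂₁ : ∑ i ∈ A₂, c i ≤ ∑ i ∈ A₁, c i := hmax₁ A₂ hA₂ (by linarith)
  exact ⟨A₁, hA₁, A₂, hA₂, hwA₁, hwA₂, hA₂₁,
    sum_mul_le_of_bounds hw hwB hc hx hp hpB hξ hcap hA₂₁ hmax₁ hmax₂⟩

end Knapsack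

namespace SimpleGraph

variable {V : Type*} {G : SimpleGraph V}

lemma IsAcyclic.eq_snd_of_forall_length_le (h : G.IsAcyclic) {u v w : V} {p : G.Walk u v}
    (hp : p.IsPath) (hmax : ∀ (u' v' : V) (q : G.Walk u' v'), q.IsPath → q.length ≤ p.length)
    (hadj : G.Adj u w) : w = p.snd := by
  refine h.eq_snd_of_adj_start hp hadj (not_not.1 fun hw => ?_)
  have := hmax _ _ _ (hp.cons hw (h := hadj.symm))
  simp at this

lemma IsAcyclic.exists_adj_forall_adj_eq_or_isLeaf [Finite G.edgeSet] (h : G.IsAcyclic)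
    {a b : V} (hab : G.Adj a b) :
    ∃ v u p : V, G.Adj v u ∧ (∀ z, G.Adj u z → z = v) ∧
      ∀ w, G.Adj v w → w = p ∨ ∀ z, G.Adj w z → z = v := by
  have : Nonempty V := ⟨a⟩
  obtain ⟨u, x, p, hp, hmax⟩ := Walk.exists_isPath_forall_isPath_length_le_length G
  cases p with
  | nil => simpa using hmax _ _ _ (Walk.IsPath.of_adj hab)
  | @cons _ v _ huv q =>
    obtain ⟨hq, hu⟩ := (Walk.cons_isPath_iff _ _).1 hp
    have hleaf : ∀ w, G.Adj v w → w ∉ q.support → ∀ z, G.Adj w z → z = v :=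
      fun w hw hwq z hz => by
        simpa using h.eq_snd_of_forall_length_le (hq.cons hwq (h := hw.symm))
          (fun _ _ r hr => by simpa using hmax _ _ r hr) hz
    refine ⟨v, u, q.snd, huv.symm, hleaf u huv.symm hu, fun w hw => ?_⟩
    by_cases hwq : w ∈ q.support
    · exact .inl (h.eq_snd_of_adj_start hq hw hwq)
    · exact .inr (hleaf w hw hwq)

end SimpleGraph

section PendantStar

variable {V : Type*}

structure IsPendantStar (F S : Finset (Sym2 V)) (v : V) : Prop where
  subset : S ⊆ F
  mem : ∀ f ∈ S, v ∈ f
  eq_of_mem : ∀ f ∈ S, ∀ w ∈ f, w ≠ v → ∀ e ∈ F, w ∈ e → e = f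

lemma exists_eq_mk_adj_fromEdgeSet {F : Set (Sym2 V)} (hF : ∀ e ∈ F, ¬e.IsDiag) {e : Sym2 V}
    (he : e ∈ F) {w : V} (hw : w ∈ e) : ∃ z, e = s(w, z) ∧ (fromEdgeSet F).Adj w z := by
  obtain ⟨z, rfl⟩ := Sym2.mem_iff_exists.1 hw
  exact ⟨z, rfl, (fromEdgeSet_adj _).2 ⟨he, fun h => hF _ he (Sym2.mk_isDiag_iff.2 h)⟩⟩

lemma exists_isPendantStar [DecidableEq V] {F : Finset (Sym2 V)} (hF : ∀ e ∈ F, ¬e.IsDiag)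
    (hacyc : (fromEdgeSet (F : Set (Sym2 V))).IsAcyclic) (hne : F.Nonempty) :
    ∃ v S ep, IsPendantStar F S v ∧ S.Nonempty ∧ ∀ e ∈ F \ S, v ∈ e → e = ep := by
  classical
  set H := fromEdgeSet (F : Set (Sym2 V))
  obtain ⟨e₀, he₀⟩ := hne
  obtain ⟨a, -, hab⟩ := exists_eq_mk_adj_fromEdgeSet hF he₀ (Sym2.out_fst_mem e₀)
  obtain ⟨v, u, p, hvu, hu, hpar⟩ := hacyc.exists_adj_forall_adj_eq_or_isLeaf hab
  set S := {f ∈ F | v ∈ f ∧ ∀ w ∈ f, w ≠ v → ∀ e ∈ F, w ∈ e → e = f}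
  have hmemS : ∀ w, H.Adj v w → (∀ z, H.Adj w z → z = v) → s(v, w) ∈ S := by
    intro w hvw hw
    refine mem_filter.2 ⟨((fromEdgeSet_adj _).1 hvw).1, Sym2.mem_mk_left v w,
      fun w' hw' hw'v e he hwe => ?_⟩
    obtain rfl : w' = w := (Sym2.mem_iff.1 hw').resolve_left hw'v
    obtain ⟨z, rfl, hz⟩ := exists_eq_mk_adj_fromEdgeSet hF he hwe
    rw [hw z hz, Sym2.eq_swap]
  refine ⟨v, S, s(v, p), ⟨filter_subset _ F, fun f hf => (mem_filter.1 hf).2.1,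
    fun f hf => (mem_filter.1 hf).2.2⟩, ⟨_, hmemS u hvu hu⟩, fun e he hve => ?_⟩
  obtain ⟨heF, heS⟩ := mem_sdiff.1 he
  obtain ⟨w, rfl, hvw⟩ := exists_eq_mk_adj_fromEdgeSet hF heF hve
  rcases hpar w hvw with rfl | hw
  · rfl
  · exact absurd (hmemS w hvw hw) heS

end PendantStar

section Rounding

variable {V : Type*} [DecidableEq V]

def IsFeasible (d : Sym2 V → V → ℤ) (b : V → ℤ) (M : Finset (Sym2 V)) : Prop :=
  ∀ u, ∑ e ∈ M with u ∈ e, d e u ≤ b u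

def HasHalfRounding (F : Finset (Sym2 V)) (d : Sym2 V → V → ℤ) (b : V → ℤ)
    (c x : Sym2 V → ℝ) : Prop :=
  ∃ M ⊆ F, IsFeasible d b M ∧ ∑ e ∈ F, c e * x e ≤ 2 * ∑ e ∈ M, c e

structure IsForestLPSolution (F : Finset (Sym2 V)) (d : Sym2 V → V → ℤ) (b : V → ℤ)
    (x : Sym2 V → ℝ) : Prop where
  -- `fromEdgeSet` drops loops, so `isAcyclic` alone would not exclude them
  not_isDiag : ∀ e ∈ F, ¬e.IsDiag
  demand_pos : ∀ e ∈ F, ∀ u ∈ e, 0 < d e u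
  demand_le_capacity : ∀ e ∈ F, ∀ u ∈ e, d e u ≤ b u
  mem_Icc : ∀ e ∈ F, x e ∈ Set.Icc 0 1
  load_le : ∀ u, ∑ e ∈ F with u ∈ e, (d e u : ℝ) * x e ≤ b u
  isAcyclic : (fromEdgeSet (F : Set (Sym2 V))).IsAcyclic

variable {F S M A : Finset (Sym2 V)} {d : Sym2 V → V → ℤ} {b : V → ℤ} {c x : Sym2 V → ℝ}
  {v : V}

lemma IsFeasible.subset (h : IsFeasible d b M) (hd : ∀ e ∈ M, ∀ u ∈ e, 0 ≤ d e u)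
    (hA : A ⊆ M) : IsFeasible d b A := fun u =>
  (sum_le_sum_of_subset_of_nonneg (filter_subset_filter _ hA)
    fun e he _ => hd e (mem_filter.1 he).1 u (mem_filter.1 he).2).trans (h u)

lemma IsPendantStar.isFeasible_union (hS : IsPendantStar F S v)
    (hdb : ∀ e ∈ F, ∀ u ∈ e, d e u ≤ b u) (hM : M ⊆ F \ S) (hMf : IsFeasible d b M)
    (hA : A ⊆ S) (hv : ∑ e ∈ M with v ∈ e, d e v + ∑ e ∈ A, d e v ≤ b v) :
    IsFeasible d b (M ∪ A) := by
  intro u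
  rw [filter_union, sum_union (disjoint_filter_filter (sdiff_disjoint.mono hM hA))]
  by_cases huv : u = v
  · subst huv
    rwa [filter_true_of_mem fun f hf => hS.mem f (hA hf)]
  by_cases hu : ∃ f ∈ A, u ∈ f
  · obtain ⟨f, hfA, huf⟩ := hu
    have hone : ∀ e ∈ F, u ∈ e → e = f := hS.eq_of_mem f (hA hfA) u huf huv
    have hM0 : {e ∈ M | u ∈ e} = ∅ := filter_false_of_mem fun e he hue =>
      (mem_sdiff.1 (hM he)).2 (hone e (mem_sdiff.1 (hM he)).1 hue ▸ hA hfA)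
    have hA1 : {e ∈ A | u ∈ e} = {f} := eq_singleton_iff_unique_mem.2
      ⟨mem_filter.2 ⟨hfA, huf⟩, fun e he => hone e (hS.subset (hA (mem_filter.1 he).1))
        (mem_filter.1 he).2⟩
    rw [hM0, hA1, sum_empty, sum_singleton, zero_add]
    exact hdb f (hS.subset (hA hfA)) u huf
  · push Not at hu
    rw [filter_false_of_mem hu, sum_empty, add_zero]
    exact hMf u

lemma IsPendantStar.sum_filter_mem (hS : IsPendantStar F S v) (f : Sym2 V → ℝ) :
    ∑ e ∈ F with v ∈ e, f e = ∑ e ∈ S, f e + ∑ e ∈ F \ S with v ∈ e, f e := by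
  rw [sum_filter, sum_filter, ← sum_sdiff hS.subset, add_comm,
    sum_congr rfl fun e he => if_pos (hS.mem e he)]

lemma isForestLPSolution_filter_pos {E : Finset (Sym2 V)} {y : Sym2 V → ℝ}
    (hE : ∀ e ∈ E, ¬e.IsDiag) (hd : ∀ e ∈ E, ∀ u ∈ e, 0 < d e u)
    (hdb : ∀ e ∈ E, ∀ u ∈ e, d e u ≤ b u) (hy : ∀ e ∈ E, y e ∈ Set.Icc 0 1)
    (hload : ∀ u, ∑ e ∈ E with u ∈ e, (d e u : ℝ) * y e ≤ b u)
    (hacyc : (fromEdgeSet {e | e ∈ E ∧ 0 < y e}).IsAcyclic) :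
    IsForestLPSolution {e ∈ E | 0 < y e} d b y where
  not_isDiag e he := hE e (mem_filter.1 he).1
  demand_pos e he := hd e (mem_filter.1 he).1
  demand_le_capacity e he := hdb e (mem_filter.1 he).1
  mem_Icc e he := hy e (mem_filter.1 he).1
  load_le u := (sum_le_sum_of_subset_of_nonneg (filter_subset_filter _ (filter_subset _ E))
    fun e he _ => mul_nonneg (Int.cast_nonneg (hd e (mem_filter.1 he).1 u (mem_filter.1 he).2).le)
      (hy e (mem_filter.1 he).1).1).trans (hload u)
  isAcyclic := by simpa using hacyc

namespace IsForestLPSolution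

lemma subset (h : IsForestLPSolution F d b x) (hA : A ⊆ F) : IsForestLPSolution A d b x where
  not_isDiag e he := h.not_isDiag e (hA he)
  demand_pos e he := h.demand_pos e (hA he)
  demand_le_capacity e he := h.demand_le_capacity e (hA he)
  mem_Icc e he := h.mem_Icc e (hA he)
  load_le u := (sum_le_sum_of_subset_of_nonneg (filter_subset_filter _ hA) fun e he _ =>
    mul_nonneg (Int.cast_nonneg (h.demand_pos e (mem_filter.1 he).1 u (mem_filter.1 he).2).le)
      (h.mem_Icc e (mem_filter.1 he).1).1).trans (h.load_le u)
  isAcyclic := h.isAcyclic.anti (fromEdgeSet_mono (coe_subset.2 hA))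

lemma capacity_nonneg (h : IsForestLPSolution F d b x) (u : V) : 0 ≤ b u := by
  simpa using (h.subset (empty_subset F)).load_le u

lemma exists_knapsack_pair (h : IsForestLPSolution F d b x) (hS : IsPendantStar F S v)
    (hc : ∀ e ∈ S, 0 ≤ c e) {p : ℤ} {ξ : ℝ} (hp : 0 ≤ p) (hpb : p ≤ b v)
    (hξ : ξ ∈ Set.Icc 0 1) (hcap : ∑ e ∈ S, (d e v : ℝ) * x e + p * ξ ≤ b v) :
    ∃ A₁ ⊆ S, ∃ A₂ ⊆ S, ∑ e ∈ A₁, d e v ≤ b v ∧ ∑ e ∈ A₂, d e v ≤ b v - p ∧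
      ∑ e ∈ A₂, c e ≤ ∑ e ∈ A₁, c e ∧
      ∑ e ∈ S, c e * x e ≤ (2 - ξ) * ∑ e ∈ A₁, c e + ξ * ∑ e ∈ A₂, c e := by
  obtain ⟨A₁, hA₁, A₂, hA₂, hw₁, hw₂, h₂₁, hle⟩ := Knapsack.exists_optimal_pair
    (w := fun e => (d e v : ℝ)) (B := b v)
    (fun e he => Int.cast_pos.2 (h.demand_pos e (hS.subset he) v (hS.mem e he)))
    (fun e he => Int.cast_le.2 (h.demand_le_capacity e (hS.subset he) v (hS.mem e he)))
    hc (fun e he => h.mem_Icc e (hS.subset he)) (Int.cast_nonneg hp) (Int.cast_le.2 hpb) hξ hcap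
  exact ⟨A₁, hA₁, A₂, hA₂, by exact_mod_cast hw₁, by exact_mod_cast hw₂, h₂₁, hle⟩

lemma hasHalfRounding_of_root (h : IsForestLPSolution F d b x) (hc : ∀ e ∈ F, 0 ≤ c e)
    (hS : IsPendantStar F S v) (hroot : ∀ e ∈ F \ S, v ∉ e)
    (ih : HasHalfRounding (F \ S) d b c x) : HasHalfRounding F d b c x := by
  have hcap : ∑ e ∈ S, (d e v : ℝ) * x e + ((0 : ℤ) : ℝ) * 0 ≤ b v := by
    simpa [hS.sum_filter_mem, filter_false_of_mem hroot] using h.load_le v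
  obtain ⟨A, hA, A₂, -, hwA, -, -, hknap⟩ := h.exists_knapsack_pair hS
    (fun e he => hc e (hS.subset he)) le_rfl (h.capacity_nonneg v) ⟨le_rfl, zero_le_one⟩ hcap
  obtain ⟨M, hM, hMf, hMc⟩ := ih
  refine ⟨M ∪ A, union_subset (hM.trans sdiff_subset) (hA.trans hS.subset),
    hS.isFeasible_union h.demand_le_capacity hM hMf hA ?_, ?_⟩
  · rwa [filter_false_of_mem fun e he => hroot e (hM he), sum_empty, zero_add]
  · rw [sum_union (sdiff_disjoint.mono hM hA), ← sum_sdiff hS.subset]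
    linarith

lemma exists_isFeasible_add_knapsack (h : IsForestLPSolution F d b x)
    (hS : IsPendantStar F S v) {ep : Sym2 V} (hvep : v ∈ ep)
    (hpar : ∀ e ∈ F \ S, v ∈ e → e = ep) {A₁ A₂ : Finset (Sym2 V)} (hA₁ : A₁ ⊆ S)
    (hA₂ : A₂ ⊆ S) (hw₁ : ∑ e ∈ A₁, d e v ≤ b v) (hw₂ : ∑ e ∈ A₂, d e v ≤ b v - d ep v)
    (hM : M ⊆ F \ S) (hMf : IsFeasible d b M) :
    ∃ N ⊆ F, IsFeasible d b N ∧ ∑ e ∈ M, Function.update c ep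
      (max 0 (c ep - (∑ e ∈ A₁, c e - ∑ e ∈ A₂, c e))) e + ∑ e ∈ A₁, c e ≤ ∑ e ∈ N, c e := by
  have hMv : ∀ e ∈ M, v ∈ e → e = ep := fun e he => hpar e (hM he)
  by_cases hkeep : ep ∈ M ∧ ∑ e ∈ A₁, c e - ∑ e ∈ A₂, c e ≤ c ep
  · refine ⟨M ∪ A₂, union_subset (hM.trans sdiff_subset) (hA₂.trans hS.subset),
      hS.isFeasible_union h.demand_le_capacity hM hMf hA₂ ?_, ?_⟩
    · rw [show {e ∈ M | v ∈ e} = {ep} from eq_singleton_iff_unique_mem.2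
        ⟨mem_filter.2 ⟨hkeep.1, hvep⟩,
          fun e he => hMv e (mem_filter.1 he).1 (mem_filter.1 he).2⟩, sum_singleton]
      linarith
    · rw [sum_union (sdiff_disjoint.mono hM hA₂), sum_update_of_mem hkeep.1,
        ← add_sum_erase _ _ hkeep.1, sdiff_singleton_eq_erase, max_eq_right (by linarith)]
      linarith
  · have hM' : M.erase ep ⊆ F \ S := (erase_subset ep M).trans hM
    refine ⟨M.erase ep ∪ A₁, union_subset (hM'.trans sdiff_subset) (hA₁.trans hS.subset),
      hS.isFeasible_union h.demand_le_capacity hM'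
        (hMf.subset (fun e he u hu => (h.demand_pos e (sdiff_subset (hM he)) u hu).le)
          (erase_subset ep M)) hA₁ ?_, ?_⟩
    · rwa [filter_false_of_mem fun e he hve =>
        ne_of_mem_erase he (hMv e (mem_of_mem_erase he) hve), sum_empty, zero_add]
    · rw [sum_union (sdiff_disjoint.mono hM' hA₁)]
      by_cases hepM : ep ∈ M
      · rw [sum_update_of_mem hepM, sdiff_singleton_eq_erase,
          max_eq_left (by linarith [not_and.1 hkeep hepM])]
        linarith
      · rw [sum_update_of_notMem hepM, erase_eq_of_notMem hepM]

lemma hasHalfRounding_of_parent (h : IsForestLPSolution F d b x) (hc : ∀ e ∈ F, 0 ≤ c e)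
    (hS : IsPendantStar F S v) {ep : Sym2 V} (hep : ep ∈ F \ S) (hvep : v ∈ ep)
    (hpar : ∀ e ∈ F \ S, v ∈ e → e = ep)
    (ih : ∀ c' : Sym2 V → ℝ, (∀ e ∈ F \ S, 0 ≤ c' e) → HasHalfRounding (F \ S) d b c' x) :
    HasHalfRounding F d b c x := by
  have hepF : ep ∈ F := (mem_sdiff.1 hep).1
  have hRv : {e ∈ F \ S | v ∈ e} = {ep} :=
    eq_singleton_iff_unique_mem.2 ⟨mem_filter.2 ⟨hep, hvep⟩,
      fun e he => hpar e (mem_filter.1 he).1 (mem_filter.1 he).2⟩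
  have hcap : ∑ e ∈ S, (d e v : ℝ) * x e + d ep v * x ep ≤ b v := by
    simpa [hS.sum_filter_mem, hRv] using h.load_le v
  obtain ⟨A₁, hA₁, A₂, hA₂, hw₁, hw₂, h₂₁, hknap⟩ := h.exists_knapsack_pair hS
    (fun e he => hc e (hS.subset he)) (h.demand_pos ep hepF v hvep).le
    (h.demand_le_capacity ep hepF v hvep) (h.mem_Icc ep hepF) hcap
  -- `ep` is charged the loss `δ` of knapsack profit at `v` that it causes when it is kept
  set δ := ∑ e ∈ A₁, c e - ∑ e ∈ A₂, c e
  set c' := Function.update c ep (max 0 (c ep - δ))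
  obtain ⟨M, hM, hMf, hMc⟩ := ih c' fun e he => by
    by_cases hee : e = ep
    · simp [c', hee]
    · simpa [c', hee] using hc e (mem_sdiff.1 he).1
  have hLP : ∑ e ∈ F \ S, c e * x e - δ * x ep ≤ ∑ e ∈ F \ S, c' e * x e := by
    have hrest : ∑ e ∈ (F \ S).erase ep, c' e * x e = ∑ e ∈ (F \ S).erase ep, c e * x e :=
      sum_congr rfl fun e he => by
        rw [show c' e = c e from Function.update_of_ne (ne_of_mem_erase he) ..]
    rw [← add_sum_erase _ _ hep, ← add_sum_erase _ _ hep, hrest,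
      show c' ep = max 0 (c ep - δ) from Function.update_self ..]
    nlinarith [le_max_right 0 (c ep - δ), (h.mem_Icc ep hepF).1]
  obtain ⟨N, hN, hNf, hNc⟩ :=
    h.exists_isFeasible_add_knapsack hS hvep hpar hA₁ hA₂ hw₁ hw₂ hM hMf
  refine ⟨N, hN, hNf, ?_⟩
  rw [← sum_sdiff hS.subset]
  nlinarith [(h.mem_Icc ep hepF).1]

theorem hasHalfRounding (h : IsForestLPSolution F d b x) (hc : ∀ e ∈ F, 0 ≤ c e) :
    HasHalfRounding F d b c x := by
  induction F using Finset.strongInduction generalizing c with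
  | H F ih =>
  rcases F.eq_empty_or_nonempty with rfl | hne
  · exact ⟨∅, empty_subset _, fun u => by simpa using h.capacity_nonneg u, by simp⟩
  obtain ⟨v, S, ep, hS, hSne, hpar⟩ := exists_isPendantStar h.not_isDiag h.isAcyclic hne
  have hR : F \ S ⊂ F := sdiff_ssubset hS.subset hSne
  have ihR : ∀ c' : Sym2 V → ℝ, (∀ e ∈ F \ S, 0 ≤ c' e) → HasHalfRounding (F \ S) d b c' x :=
    fun c' hc' => ih _ hR (h.subset hR.subset) hc'
  by_cases hep : ep ∈ F \ S ∧ v ∈ ep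
  · exact h.hasHalfRounding_of_parent hc hS hep.1 hep.2 hpar ihR
  · refine h.hasHalfRounding_of_root hc hS (fun e he hve => hep ?_)
      (ihR c fun e he => hc e (mem_sdiff.1 he).1)
    obtain rfl := hpar e he hve
    exact ⟨he, hve⟩

end IsForestLPSolution

end Rounding

theorem twoCSPIP_forest_two_approximation_general
    {V : Type*} [Fintype V] [DecidableEq V]
    (G : SimpleGraph V) [DecidableRel G.Adj]
    (d : Sym2 V → V → ℤ) (b : V → ℤ) (c : Sym2 V → ℝ)
    (hd : ∀ e ∈ G.edgeFinset, ∀ u ∈ e, 1 ≤ d e u)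
    (hnoclip : ∀ e ∈ G.edgeFinset, ∀ u ∈ e, d e u ≤ b u)
    (hc : ∀ e ∈ G.edgeFinset, 0 ≤ c e)
    (x : {e : Sym2 V // e ∈ G.edgeFinset} → ℝ)
    (hx0 : ∀ e, 0 ≤ x e) (hx1 : ∀ e, x e ≤ 1)
    (hxcap : ∀ u : V,
      ∑ e : {e : Sym2 V // e ∈ G.edgeFinset},
        (if u ∈ e.1 then (d e.1 u : ℝ) * x e else 0) ≤ (b u : ℝ))
    (hforest : (SimpleGraph.fromEdgeSet
      {e : Sym2 V | ∃ h : e ∈ G.edgeFinset, 0 < x ⟨e, h⟩}).IsAcyclic) :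
    ∃ M : Finset (Sym2 V), M ⊆ G.edgeFinset ∧
      (∀ u : V, ∑ e ∈ M.filter (fun e => u ∈ e), d e u ≤ b u) ∧
      (1 / 2) * ∑ e : {e : Sym2 V // e ∈ G.edgeFinset}, c e.1 * x e ≤ ∑ e ∈ M, c e := by
  set y : Sym2 V → ℝ := Function.extend Subtype.val x 0
  have hxy : ∀ e, x e = y e := fun e => (Subtype.val_injective.extend_apply x 0 e).symm
  have hy : ∀ e ∈ G.edgeFinset, y e ∈ Set.Icc 0 1 := fun e he => by
    rw [← hxy ⟨e, he⟩]
    exact ⟨hx0 _, hx1 _⟩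
  have hsum : ∀ g : Sym2 V → ℝ → ℝ, ∑ e : {e // e ∈ G.edgeFinset}, g e (x e)
      = ∑ e ∈ G.edgeFinset, g e (y e) := fun g => by
    simp_rw [hxy]
    exact sum_coe_sort G.edgeFinset fun e => g e (y e)
  have hLP := isForestLPSolution_filter_pos
    (fun e he => G.not_isDiag_of_mem_edgeSet (mem_edgeFinset.1 he))
    (fun e he u hu => zero_lt_one.trans_le (hd e he u hu)) hnoclip hy
    (fun u => by simpa only [sum_filter] using
      (hsum fun e t => if u ∈ e then (d e u : ℝ) * t else 0).symm.trans_le (hxcap u))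
    (by convert hforest using 2; ext e; exact ⟨fun ⟨he, hpos⟩ => ⟨he, hxy ⟨e, he⟩ ▸ hpos⟩,
      fun ⟨he, hpos⟩ => ⟨he, hxy ⟨e, he⟩ ▸ hpos⟩⟩)
  obtain ⟨M, hMF, hMf, hMc⟩ := hLP.hasHalfRounding fun e he => hc e (mem_filter.1 he).1
  refine ⟨M, hMF.trans (filter_subset _ _), hMf, ?_⟩
  rw [hsum fun e t => c e * t, ← sum_filter_of_ne fun e he hne =>
    (hy e he).1.lt_of_ne' (right_ne_zero_of_mul hne)]
  linarith

/-- **2-approximation on forests (Shepherd–Vetta).** If the support of a fractional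
solution of a 2-CS-PIP instance is acyclic, then there is an integral solution of
profit at least half the LP value. -/
theorem twoCSPIP_forest_two_approximation
    {V : Type*} [Fintype V] [DecidableEq V]
    (G : SimpleGraph V) [DecidableRel G.Adj]
    (d : Sym2 V → V → ℤ) (b : V → ℤ) (c : Sym2 V → ℝ)
    (hd : ∀ e ∈ G.edgeFinset, ∀ u ∈ e, 1 ≤ d e u)
    (hb : ∀ u : V, 1 ≤ b u)
    (hnoclip : ∀ e ∈ G.edgeFinset, ∀ u ∈ e, d e u ≤ b u)
    (hc : ∀ e ∈ G.edgeFinset, 0 ≤ c e)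
    (x : {e : Sym2 V // e ∈ G.edgeFinset} → ℝ)
    (hx0 : ∀ e, 0 ≤ x e) (hx1 : ∀ e, x e ≤ 1)
    (hxcap : ∀ u : V,
      ∑ e : {e : Sym2 V // e ∈ G.edgeFinset},
        (if u ∈ e.1 then (d e.1 u : ℝ) * x e else 0) ≤ (b u : ℝ))
    (hforest : (SimpleGraph.fromEdgeSet
      {e : Sym2 V | ∃ h : e ∈ G.edgeFinset, 0 < x ⟨e, h⟩}).IsAcyclic) :
    ∃ M : Finset (Sym2 V), M ⊆ G.edgeFinset ∧
      (∀ u : V, ∑ e ∈ M.filter (fun e => u ∈ e), d e u ≤ b u) ∧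
      (1 / 2) * ∑ e : {e : Sym2 V // e ∈ G.edgeFinset}, c e.1 * x e ≤ ∑ e ∈ M, c e :=
  twoCSPIP_forest_two_approximation_general G d b c hd hnoclip hc x hx0 hx1 hxcap hforest
end

section
/- Let G = (V, E) be a finite simple graph in which every connected component contains at most one cycle, and let w : E → ℝ with w_e ≥ 0 for all e. Then there exists an acyclic subset F ⊆ E (a forest) with Σ_{e ∈ F} w_e ≥ (2/3) Σ_{e ∈ E} w_e. -/
/-!
Work one connected component at a time: acyclicity and the weight bound can both be checked
componentwise. A component with a cycle has exactly as many edges as vertices; deleting a cheapest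
edge of one of its cycles costs at most a third of the cycle's weight, since a cycle has at least
three edges. The component stays connected and now has fewer edges than vertices, so it is a tree:
cutting a further cycle would leave a connected graph on `n` vertices with fewer than `n - 1` edges.
-/

open Finset SimpleGraph

namespace SimpleGraph

variable {V : Type*} {G H : SimpleGraph V}

lemma reachable_deleteEdges_of_mem_edges_of_isCycle {u : V} {p : G.Walk u u} (hp : p.IsCycle)
    {e : Sym2 V} (he : e ∈ p.edges) {x y : V} (hxy : G.Reachable x y) :
    (G.deleteEdges {e}).Reachable x y := by
  rw [reachable_iff_reflTransGen] at hxy ⊢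
  refine hxy.lift' id fun a b hab => (reachable_iff_reflTransGen a b).1 ?_
  by_cases hab' : s(a, b) = e
  · subst hab'
    exact (adj_and_reachable_delete_edges_iff_exists_cycle.2 ⟨u, p, hp, he⟩).2
  · exact (deleteEdges_adj.2 ⟨hab, hab'⟩).reachable

lemma ncard_le_card_edgeFinset_add_one_of_reachable [Finite V] [Fintype H.edgeSet]
    {A : Set V} {r : V} (hA : ∀ x ∈ A, H.Reachable r x) :
    A.ncard ≤ #H.edgeFinset + 1 := by
  set c := H.connectedComponentMk r
  have hAc : A ⊆ c.supp := fun x hx => ConnectedComponent.sound (hA x hx).symm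
  calc A.ncard ≤ c.supp.ncard := Set.ncard_le_ncard hAc
    _ = Nat.card c.supp := (Nat.card_coe_set_eq _).symm
    _ ≤ Nat.card c.toSimpleGraph.edgeSet + 1 :=
      c.connected_toSimpleGraph.card_vert_le_card_edgeSet_add_one
    _ ≤ Nat.card H.edgeSet + 1 := by
      gcongr
      exact Nat.card_le_card_of_injective _ (Embedding.induce _).mapEdgeSet.injective
    _ = #H.edgeFinset + 1 := by rw [Nat.card_eq_fintype_card, edgeFinset_card]

lemma edgeFinset_deleteEdges_singleton [DecidableEq V] [Fintype H.edgeSet] (e : Sym2 V)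
    [Fintype (H.deleteEdges {e}).edgeSet] :
    (H.deleteEdges {e}).edgeFinset = H.edgeFinset.erase e := by
  ext f
  simp [and_comm]

lemma isAcyclic_of_card_edgeFinset_lt_ncard [Fintype V] [Fintype H.edgeSet] {A : Set V} {r : V}
    (hA : ∀ x ∈ A, H.Reachable r x) (hcard : #H.edgeFinset < A.ncard) : H.IsAcyclic := by
  classical
  intro u p hp
  obtain ⟨e, he⟩ := List.exists_mem_of_ne_nil _ (p.edges_eq_nil.not.2 hp.not_nil)
  have hreach : ∀ x ∈ A, (H.deleteEdges {e}).Reachable r x := fun x hx =>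
    reachable_deleteEdges_of_mem_edges_of_isCycle hp he (hA x hx)
  have hdel : #(H.deleteEdges {e}).edgeFinset + 1 = #H.edgeFinset := by
    rw [edgeFinset_deleteEdges_singleton,
      card_erase_add_one (mem_edgeFinset.2 (p.edges_subset_edgeSet he))]
  have := ncard_le_card_edgeFinset_add_one_of_reachable hreach
  omega

lemma Walk.IsCycle.exists_mem_edges_three_mul_le_sum [DecidableEq V] {u : V} {p : G.Walk u u}
    (hp : p.IsCycle) {w : Sym2 V → ℝ} (hw : ∀ e ∈ p.edges, 0 ≤ w e) :
    ∃ e ∈ p.edges, 3 * w e ≤ ∑ f ∈ p.edges.toFinset, w f := by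
  have hcard : 3 ≤ #p.edges.toFinset := by
    rw [List.toFinset_card_of_nodup hp.edges_nodup, Walk.length_edges]
    exact hp.three_le_length
  obtain ⟨e, he, hmin⟩ := p.edges.toFinset.exists_min_image w (card_pos.1 (by omega))
  have he : e ∈ p.edges := List.mem_toFinset.1 he
  refine ⟨e, he, ?_⟩
  calc 3 * w e ≤ #p.edges.toFinset * w e := by gcongr; exacts [hw e he, mod_cast hcard]
    _ ≤ ∑ f ∈ p.edges.toFinset, w f := by
      rw [← nsmul_eq_mul]; exact card_nsmul_le_sum _ _ _ hmin

theorem exists_isAcyclic_two_thirds_of_card_edgeFinset_le [Fintype V] [Fintype H.edgeSet]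
    {A : Set V} {r : V} (hA : ∀ x ∈ A, H.Reachable r x)
    (hcard : #H.edgeFinset ≤ A.ncard) {w : Sym2 V → ℝ}
    (hw : ∀ e ∈ H.edgeFinset, 0 ≤ w e) :
    ∃ F ⊆ H.edgeFinset, (fromEdgeSet (F : Set (Sym2 V))).IsAcyclic ∧
      2 / 3 * ∑ e ∈ H.edgeFinset, w e ≤ ∑ e ∈ F, w e := by
  classical
  by_cases hH : H.IsAcyclic
  · refine ⟨H.edgeFinset, subset_rfl, by rwa [coe_edgeFinset, fromEdgeSet_edgeSet], ?_⟩
    linarith [sum_nonneg hw]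
  obtain ⟨u, p, hp⟩ : ∃ u, ∃ p : H.Walk u u, p.IsCycle := by simpa [IsAcyclic] using hH
  have hpE : ∀ e ∈ p.edges, e ∈ H.edgeFinset := fun e he =>
    mem_edgeFinset.2 (p.edges_subset_edgeSet he)
  obtain ⟨e, he, hle⟩ := hp.exists_mem_edges_three_mul_le_sum fun f hf => hw f (hpE f hf)
  refine ⟨(H.deleteEdges {e}).edgeFinset, edgeFinset_mono (deleteEdges_le _), ?_, ?_⟩
  · rw [coe_edgeFinset, fromEdgeSet_edgeSet]
    refine isAcyclic_of_card_edgeFinset_lt_ncard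
      (fun x hx => reachable_deleteEdges_of_mem_edges_of_isCycle hp he (hA x hx)) ?_
    rw [edgeFinset_deleteEdges_singleton, card_erase_of_mem (hpE e he)]
    have := card_pos.2 ⟨e, hpE e he⟩
    omega
  · have hcycle : ∑ f ∈ p.edges.toFinset, w f ≤ ∑ f ∈ H.edgeFinset, w f :=
      sum_le_sum_of_subset_of_nonneg (fun f hf => hpE f (List.mem_toFinset.1 hf))
        fun f hf _ => hw f hf
    rw [edgeFinset_deleteEdges_singleton, sum_erase_eq_sub (hpE e he)]
    linarith

namespace ConnectedComponent

lemma edgeSet_spanningCoe_toSimpleGraph (c : G.ConnectedComponent) :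
    c.toSimpleGraph.spanningCoe.edgeSet = {e ∈ G.edgeSet | ∀ v ∈ e, v ∈ c.supp} := by
  ext ⟨x, y⟩
  simp only [mem_edgeSet, adj_spanningCoe_toSimpleGraph, Set.mem_ofPred_eq, Sym2.mem_iff,
    forall_eq_or_imp, forall_eq]
  exact ⟨fun ⟨hx, hxy⟩ => ⟨hxy, hx, (c.mem_supp_congr_adj hxy).1 hx⟩,
    fun ⟨hxy, hx, _⟩ => ⟨hx, hxy⟩⟩

lemma spanningCoe_toSimpleGraph_le (c : G.ConnectedComponent) :
    c.toSimpleGraph.spanningCoe ≤ G :=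
  spanningCoe_induce_le _ _

lemma eq_of_mem_edgeSet_spanningCoe {c d : G.ConnectedComponent} {e : Sym2 V}
    (hc : e ∈ c.toSimpleGraph.spanningCoe.edgeSet)
    (hd : e ∈ d.toSimpleGraph.spanningCoe.edgeSet) : c = d := by
  rw [edgeSet_spanningCoe_toSimpleGraph] at hc hd
  obtain ⟨x, y⟩ := e
  exact eq_of_common_vertex (hc.2 x (Sym2.mem_mk_left x y)) (hd.2 x (Sym2.mem_mk_left x y))

lemma reachable_spanningCoe_toSimpleGraph (c : G.ConnectedComponent) {x y : V}
    (hx : x ∈ c.supp) (hy : y ∈ c.supp) : c.toSimpleGraph.spanningCoe.Reachable x y :=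
  (c.reachable_toSimpleGraph hx hy).map (Embedding.map (.subtype _) _).toHom

end ConnectedComponent

lemma Walk.edges_subset_edgeSet_connectedComponent {u v : V} (p : G.Walk u v) :
    ∀ e ∈ p.edges, e ∈ (G.connectedComponentMk u).toSimpleGraph.spanningCoe.edgeSet := by
  classical
  intro e he
  rw [ConnectedComponent.edgeSet_spanningCoe_toSimpleGraph]
  refine ⟨p.edges_subset_edgeSet he, fun x hx => ?_⟩
  have hxp := p.mem_support_of_mem_edges he hx
  exact ConnectedComponent.sound (p.takeUntil x hxp).reachable.symm

lemma isAcyclic_of_forall_connectedComponent (hle : H ≤ G)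
    (h : ∀ c : G.ConnectedComponent, (H ⊓ c.toSimpleGraph.spanningCoe).IsAcyclic) :
    H.IsAcyclic := by
  classical
  intro u p hp
  have hp' : ∀ e ∈ p.edges,
      e ∈ (H ⊓ (G.connectedComponentMk u).toSimpleGraph.spanningCoe).edgeSet := fun e he =>
    (edgeSet_inf _ _).ge ⟨p.edges_subset_edgeSet he,
      (p.mapLe hle).edges_subset_edgeSet_connectedComponent e
        (by rwa [Walk.edges_mapLe_eq_edges])⟩
  exact h _ (p.transfer _ hp') (hp.transfer hp')

theorem exists_isAcyclic_of_forall_connectedComponent [Fintype V] [DecidableEq V]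
    [DecidableRel G.Adj] [∀ c : G.ConnectedComponent, Fintype c.toSimpleGraph.spanningCoe.edgeSet]
    {w : Sym2 V → ℝ} {a : ℝ}
    (h : ∀ c : G.ConnectedComponent, ∃ F ⊆ c.toSimpleGraph.spanningCoe.edgeFinset,
      (fromEdgeSet (F : Set (Sym2 V))).IsAcyclic ∧
        a * ∑ e ∈ c.toSimpleGraph.spanningCoe.edgeFinset, w e ≤ ∑ e ∈ F, w e) :
    ∃ F ⊆ G.edgeFinset, (fromEdgeSet (F : Set (Sym2 V))).IsAcyclic ∧
      a * ∑ e ∈ G.edgeFinset, w e ≤ ∑ e ∈ F, w e := by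
  choose F hFE hFacyc hFw using h
  set E := fun c : G.ConnectedComponent => c.toSimpleGraph.spanningCoe.edgeFinset
  have hdisj : (↑(univ : Finset G.ConnectedComponent) : Set _).PairwiseDisjoint E :=
    fun c _ d _ hcd => Finset.disjoint_left.2 fun ⦃e⦄ hc hd =>
      hcd (ConnectedComponent.eq_of_mem_edgeSet_spanningCoe (mem_edgeFinset.1 hc)
        (mem_edgeFinset.1 hd))
  have hEG : G.edgeFinset = univ.biUnion E := by
    ext e
    simp only [mem_biUnion, mem_univ, true_and, E, mem_edgeFinset]
    refine ⟨fun he => ?_, fun ⟨c, hc⟩ => edgeSet_mono c.spanningCoe_toSimpleGraph_le hc⟩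
    obtain ⟨x, y⟩ := e
    exact ⟨_, (mem_edgeSet G).1 he |>.toWalk.edges_subset_edgeSet_connectedComponent _
      (by simp)⟩
  have hFG : univ.biUnion F ⊆ G.edgeFinset := hEG ▸ biUnion_mono fun c _ => hFE c
  refine ⟨univ.biUnion F, hFG, ?_, ?_⟩
  · refine isAcyclic_of_forall_connectedComponent (G := G)
      (fun x y h => mem_edgeFinset.1 (hFG ((fromEdgeSet_adj _).1 h).1))
      fun c => (hFacyc c).anti ?_
    rintro x y ⟨hxy, hc⟩
    obtain ⟨he, hne⟩ := (fromEdgeSet_adj _).1 hxy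
    obtain ⟨d, -, hd⟩ := mem_biUnion.1 he
    obtain rfl :=
      ConnectedComponent.eq_of_mem_edgeSet_spanningCoe (mem_edgeFinset.1 (hFE d hd)) hc
    exact (fromEdgeSet_adj _).2 ⟨hd, hne⟩
  · rw [hEG, sum_biUnion hdisj, sum_biUnion (hdisj.mono_on fun c _ => hFE c), mul_sum]
    exact sum_le_sum fun c _ => hFw c

end SimpleGraph

/-- **Deleting a cheapest edge from each cycle.** If every connected component of a
finite simple graph `G` contains at most one cycle (i.e., has at most as many edges as
vertices), then for any nonnegative edge weights there is an acyclic edge set `F`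
retaining at least `2/3` of the total weight. -/
theorem unicyclic_to_forest_two_thirds
    {V : Type*} [Fintype V] [DecidableEq V]
    (G : SimpleGraph V) [DecidableRel G.Adj]
    (hG : ∀ c : G.ConnectedComponent,
      {e ∈ G.edgeSet | ∀ v ∈ e, v ∈ c.supp}.ncard ≤ c.supp.ncard)
    (w : Sym2 V → ℝ) (hw : ∀ e ∈ G.edgeFinset, 0 ≤ w e) :
    ∃ F : Finset (Sym2 V), F ⊆ G.edgeFinset ∧
      (SimpleGraph.fromEdgeSet (F : Set (Sym2 V))).IsAcyclic ∧
      (2 / 3) * ∑ e ∈ G.edgeFinset, w e ≤ ∑ e ∈ F, w e := by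
  let (c : G.ConnectedComponent) : Fintype c.toSimpleGraph.spanningCoe.edgeSet :=
    Fintype.ofFinite _
  refine exists_isAcyclic_of_forall_connectedComponent fun c => ?_
  obtain ⟨r, hr⟩ := c.nonempty_supp
  refine exists_isAcyclic_two_thirds_of_card_edgeFinset_le
    (fun x hx => c.reachable_spanningCoe_toSimpleGraph hr hx) ?_ fun e he =>
      hw e (edgeFinset_mono c.spanningCoe_toSimpleGraph_le he)
  rw [← Set.ncard_coe_finset, coe_edgeFinset,
    ConnectedComponent.edgeSet_spanningCoe_toSimpleGraph]
  exact hG c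
end

section
/- Let E be a finite set and let 𝓕 be a nonempty downward-closed family of subsets of E (if M ∈ 𝓕 and M' ⊆ M then M' ∈ 𝓕). Let M_1, …, M_m ∈ 𝓕, let λ_1, …, λ_m ≥ 0 with Σ_{j=1}^m λ_j = 1, and let y : E → ℝ satisfy 0 ≤ y_e ≤ Σ_{j : e ∈ M_j} λ_j for every e ∈ E. Then there exist finitely many sets N_1, …, N_p ∈ 𝓕 and weights λ'_1, …, λ'_p ≥ 0 with Σ_{j=1}^p λ'_j = 1 such that y_e = Σ_{j : e ∈ N_j} λ'_j for every e ∈ E. -/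
/-!
Induct on the set of elements where `y` is already met with equality. To lower the coverage of
one element `e` to `y e`, split every member `M j` of the combination into `M j` with weight
`t λ_j` and `M j \ {e}` (still in `𝓕`, which is downward closed) with weight `(1 - t) λ_j`,
where `t = y e / coverage e`. This scales the coverage of `e` by `t` and leaves that of every
other element unchanged.
-/

open Finset

section

variable {E : Type*}

structure IsConvexFamily (𝓕 : Set (Finset E)) {ι : Type*} [Fintype ι]
    (M : ι → Finset E) (w : ι → ℝ) : Prop where
  mem : ∀ j, M j ∈ 𝓕
  nonneg : ∀ j, 0 ≤ w j
  sum_eq_one : ∑ j, w j = 1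

theorem IsConvexFamily.comp_equiv {𝓕 : Set (Finset E)} {ι κ : Type*} [Fintype ι] [Fintype κ]
    {M : ι → Finset E} {w : ι → ℝ} (h : IsConvexFamily 𝓕 M w) (σ : κ ≃ ι) :
    IsConvexFamily 𝓕 (M ∘ σ) (w ∘ σ) where
  mem j := h.mem (σ j)
  nonneg j := h.nonneg (σ j)
  sum_eq_one := (Equiv.sum_comp σ w).trans h.sum_eq_one

variable [DecidableEq E]

def coverage {ι : Type*} [Fintype ι] (M : ι → Finset E) (w : ι → ℝ) (e : E) : ℝ :=
  ∑ j ∈ univ.filter (fun j => e ∈ M j), w j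

section Coverage

variable {ι κ : Type*} [Fintype ι] [Fintype κ]

theorem coverage_eq_sum_ite (M : ι → Finset E) (w : ι → ℝ) (e : E) :
    coverage M w e = ∑ j, if e ∈ M j then w j else 0 :=
  sum_filter _ _

theorem coverage_comp_equiv (σ : κ ≃ ι) (M : ι → Finset E) (w : ι → ℝ) (e : E) :
    coverage (M ∘ σ) (w ∘ σ) e = coverage M w e := by
  simp only [coverage_eq_sum_ite]
  exact Equiv.sum_comp σ fun j => if e ∈ M j then w j else 0

theorem coverage_sumElim (M : ι → Finset E) (N : κ → Finset E) (v : ι → ℝ) (w : κ → ℝ)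
    (e : E) : coverage (Sum.elim M N) (Sum.elim v w) e = coverage M v e + coverage N w e := by
  simp only [coverage_eq_sum_ite, Fintype.sum_sum_type, Sum.elim_inl, Sum.elim_inr]
  rfl

theorem coverage_smul (M : ι → Finset E) (c : ℝ) (w : ι → ℝ) (e : E) :
    coverage M (c • w) e = c * coverage M w e := by
  simp only [coverage, Pi.smul_apply, smul_eq_mul, mul_sum]

theorem coverage_erase_self (M : ι → Finset E) (w : ι → ℝ) (e : E) :
    coverage (fun j => (M j).erase e) w e = 0 := by
  simp [coverage]

theorem coverage_erase_of_ne (M : ι → Finset E) (w : ι → ℝ) {e f : E} (hfe : f ≠ e) :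
    coverage (fun j => (M j).erase e) w f = coverage M w f := by
  simp [coverage, mem_erase, hfe]

end Coverage

theorem exists_mul_eq_of_le {a b : ℝ} (ha : 0 ≤ a) (hab : a ≤ b) :
    ∃ t : ℝ, 0 ≤ t ∧ t ≤ 1 ∧ t * b = a := by
  rcases (ha.trans hab).eq_or_lt with hb | hb
  · exact ⟨0, le_rfl, zero_le_one, by linarith⟩
  · exact ⟨a / b, div_nonneg ha hb.le, (div_le_one hb).mpr hab, div_mul_cancel₀ a hb.ne'⟩

namespace IsConvexFamily

variable {𝓕 : Set (Finset E)} {ι : Type*} [Fintype ι]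
  {M : ι → Finset E} {w : ι → ℝ}

theorem split (h : IsConvexFamily 𝓕 M w) (hdc : ∀ M ∈ 𝓕, ∀ M' ⊆ M, M' ∈ 𝓕) (e : E)
    {t : ℝ} (ht0 : 0 ≤ t) (ht1 : t ≤ 1) :
    IsConvexFamily 𝓕 (Sum.elim M fun j => (M j).erase e) (Sum.elim (t • w) ((1 - t) • w)) where
  mem
    | .inl j => h.mem j
    | .inr j => hdc _ (h.mem j) _ (erase_subset e _)
  nonneg
    | .inl j => mul_nonneg ht0 (h.nonneg j)
    | .inr j => mul_nonneg (sub_nonneg.mpr ht1) (h.nonneg j)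
  sum_eq_one := by
    simp only [Fintype.sum_sum_type, Sum.elim_inl, Sum.elim_inr, Pi.smul_apply, smul_eq_mul,
      ← mul_sum, h.sum_eq_one]
    ring

end IsConvexFamily

variable {𝓕 : Set (Finset E)}

theorem IsConvexFamily.exists_coverage_eq_at (hdc : ∀ M ∈ 𝓕, ∀ M' ⊆ M, M' ∈ 𝓕)
    {ι : Type} [Fintype ι] {M : ι → Finset E} {w : ι → ℝ} (h : IsConvexFamily 𝓕 M w)
    (e : E) {a : ℝ} (ha : 0 ≤ a) (hae : a ≤ coverage M w e) :
    ∃ (κ : Type) (_ : Fintype κ) (N : κ → Finset E) (v : κ → ℝ), IsConvexFamily 𝓕 N v ∧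
      coverage N v e = a ∧ ∀ f ≠ e, coverage N v f = coverage M w f := by
  obtain ⟨t, ht0, ht1, hta⟩ := exists_mul_eq_of_le ha hae
  refine ⟨ι ⊕ ι, inferInstance, _, _, h.split hdc e ht0 ht1, ?_, fun f hfe => ?_⟩
  · rw [coverage_sumElim, coverage_smul, coverage_smul, coverage_erase_self, mul_zero,
      add_zero, hta]
  · rw [coverage_sumElim, coverage_smul, coverage_smul, coverage_erase_of_ne M w hfe]
    ring

theorem IsConvexFamily.exists_coverage_eq_on (hdc : ∀ M ∈ 𝓕, ∀ M' ⊆ M, M' ∈ 𝓕)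
    {ι : Type} [Fintype ι] {M : ι → Finset E} {w : ι → ℝ} (h : IsConvexFamily 𝓕 M w)
    {y : E → ℝ} (hy0 : ∀ e, 0 ≤ y e) (hy : ∀ e, y e ≤ coverage M w e) (F : Finset E) :
    ∃ (κ : Type) (_ : Fintype κ) (N : κ → Finset E) (v : κ → ℝ), IsConvexFamily 𝓕 N v ∧
      (∀ e, y e ≤ coverage N v e) ∧ ∀ e ∈ F, y e = coverage N v e := by
  induction F using Finset.induction with
  | empty => exact ⟨ι, _, M, w, h, hy, by simp⟩
  | @insert e F _ ih =>
    obtain ⟨κ, _, N, v, hN, hyN, hFN⟩ := ih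
    obtain ⟨κ', _, N', v', hN', hN'e, hN'f⟩ := hN.exists_coverage_eq_at hdc e (hy0 e) (hyN e)
    refine ⟨κ', _, N', v', hN', fun f => ?_, fun f hf => ?_⟩
    · by_cases hfe : f = e
      · rw [hfe, hN'e]
      · rw [hN'f f hfe]; exact hyN f
    · by_cases hfe : f = e
      · rw [hfe, hN'e]
      · rw [hN'f f hfe]; exact hFN f ((mem_insert.mp hf).resolve_left hfe)

end

theorem exact_decomposition_of_dominating_general
    {E : Type*} [Fintype E] [DecidableEq E]
    (𝓕 : Set (Finset E))
    (hdc : ∀ M ∈ 𝓕, ∀ M' ⊆ M, M' ∈ 𝓕)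
    (m : ℕ) (M : Fin m → Finset E) (hM : ∀ j, M j ∈ 𝓕)
    (lam : Fin m → ℝ) (hlam0 : ∀ j, 0 ≤ lam j) (hlam1 : ∑ j, lam j = 1)
    (y : E → ℝ)
    (hy0 : ∀ e, 0 ≤ y e)
    (hy1 : ∀ e, y e ≤ ∑ j ∈ univ.filter (fun j => e ∈ M j), lam j) :
    ∃ (p : ℕ) (N : Fin p → Finset E) (lam' : Fin p → ℝ),
      (∀ j, N j ∈ 𝓕) ∧ (∀ j, 0 ≤ lam' j) ∧ (∑ j, lam' j = 1) ∧
      ∀ e, y e = ∑ j ∈ univ.filter (fun j => e ∈ N j), lam' j := by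
  have hconv : IsConvexFamily 𝓕 M lam := ⟨hM, hlam0, hlam1⟩
  obtain ⟨κ, _, N, v, hN, -, hyN⟩ := hconv.exists_coverage_eq_on hdc hy0 hy1 univ
  let σ := (Fintype.equivFin κ).symm
  have hNσ := hN.comp_equiv σ
  exact ⟨Fintype.card κ, N ∘ σ, v ∘ σ, hNσ.mem, hNσ.nonneg, hNσ.sum_eq_one,
    fun e => (hyN e (mem_univ e)).trans (coverage_comp_equiv σ N v e).symm⟩

/-- **Exact convex decomposition from a dominating one.** If `𝓕` is a nonempty
downward-closed family of subsets of a finite set `E`, and `y : E → ℝ` is dominated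
coordinatewise by a convex combination of (indicators of) members of `𝓕` while being
nonnegative, then `y` is exactly a convex combination of (indicators of) members
of `𝓕`. -/
theorem exact_decomposition_of_dominating
    {E : Type*} [Fintype E] [DecidableEq E]
    (𝓕 : Set (Finset E)) (h𝓕 : 𝓕.Nonempty)
    (hdc : ∀ M ∈ 𝓕, ∀ M' ⊆ M, M' ∈ 𝓕)
    (m : ℕ) (M : Fin m → Finset E) (hM : ∀ j, M j ∈ 𝓕)
    (lam : Fin m → ℝ) (hlam0 : ∀ j, 0 ≤ lam j) (hlam1 : ∑ j, lam j = 1)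
    (y : E → ℝ)
    (hy0 : ∀ e, 0 ≤ y e)
    (hy1 : ∀ e, y e ≤ ∑ j ∈ univ.filter (fun j => e ∈ M j), lam j) :
    ∃ (p : ℕ) (N : Fin p → Finset E) (lam' : Fin p → ℝ),
      (∀ j, N j ∈ 𝓕) ∧ (∀ j, 0 ≤ lam' j) ∧ (∑ j, lam' j = 1) ∧
      ∀ e, y e = ∑ j ∈ univ.filter (fun j => e ∈ N j), lam' j :=
  exact_decomposition_of_dominating_general 𝓕 hdc m M hM lam hlam0 hlam1 y hy0 hy1
end

section
/- Let G = (V, E) be a finite simple graph, let e₀ = uv ∈ E, and let x be a fractional matching of G. Let x̄ : E → ℝ agree with x on E ∖ {e₀} and satisfy x̄_{e₀} = 0. Let α ∈ (0,1] and suppose α·x̄ = Σ_{i ∈ I} λ_i χ^{M_i} is a convex combination (I finite, λ_i ≥ 0, Σ_{i ∈ I} λ_i = 1) of the indicator vectors of matchings M_i of G. Then Σ { λ_i : i ∈ I such that M_i covers u or M_i covers v } ≤ 2α·(1 − x_{e₀}). -/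
/-!
Every matching `M_i` that covers a vertex `w` has at least one edge at `w`, so the weight of the
matchings covering `w` is at most `∑ᵢ λᵢ · #{e ∈ M_i | w ∈ e}`, which by double counting is the
load `∑_{e ∋ w} α x̄_e` of the combination at `w`. For `w ∈ {u, v}` this load is
`α (∑_{e ∋ w} x_e - x_{e₀}) ≤ α (1 - x_{e₀})`, and a union bound over `u` and `v` gives the
factor 2.
-/

open Finset

theorem Finset.sum_filter_or_le {ι β : Type*} [AddCommMonoid β] [PartialOrder β]
    [IsOrderedAddMonoid β] {s : Finset ι} {f : ι → β} (hf : ∀ i ∈ s, 0 ≤ f i)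
    (p q : ι → Prop) [DecidablePred p] [DecidablePred q] :
    ∑ i ∈ s with p i ∨ q i, f i ≤ ∑ i ∈ s with p i, f i + ∑ i ∈ s with q i, f i := by
  classical
  rw [filter_or, ← sum_union_inter]
  exact le_add_of_nonneg_right <| sum_nonneg fun i hi => hf i (mem_filter.1 (mem_inter.1 hi).1).1

theorem Finset.sum_eq_sum_sub_of_eq_off {E β : Type*} [Fintype E] [DecidableEq E]
    [AddCommGroup β] {f g : E → β} {a : E} (hfg : ∀ e ≠ a, g e = f e) (ha : g a = 0) :
    ∑ e, g e = ∑ e, f e - f a := by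
  rw [← sum_erase_add _ _ (mem_univ a), ← sum_erase_add _ f (mem_univ a), ha, add_zero,
    add_sub_cancel_right]
  exact sum_congr rfl fun e he => hfg e (ne_of_mem_erase he)

namespace Sym2

variable {V ι : Type*} [DecidableEq V] {I : Finset ι} {lam : ι → ℝ} {M : ι → Finset (Sym2 V)}

theorem sum_covering_le_sum_incident (hlam : ∀ i ∈ I, 0 ≤ lam i) (w : V) :
    ∑ i ∈ I with ∃ e ∈ M i, w ∈ e, lam i ≤ ∑ i ∈ I, ∑ e ∈ M i with w ∈ e, lam i := by
  rw [sum_filter]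
  refine sum_le_sum fun i hi => ?_
  split_ifs with hcov
  · obtain ⟨e, he, hwe⟩ := hcov
    exact single_le_sum (f := fun _ => lam i) (fun _ _ => hlam i hi) (mem_filter.2 ⟨he, hwe⟩)
  · exact sum_nonneg fun _ _ => hlam i hi

theorem sum_covering_le_load {S : Finset (Sym2 V)} (y : S → ℝ) (hMS : ∀ i ∈ I, M i ⊆ S)
    (hlam : ∀ i ∈ I, 0 ≤ lam i) (hy : ∀ e, y e = ∑ i ∈ I, lam i * if e.1 ∈ M i then 1 else 0)
    (w : V) :
    ∑ i ∈ I with ∃ e ∈ M i, w ∈ e, lam i ≤ ∑ e : S, if w ∈ e.1 then y e else 0 := by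
  have hcount : ∑ i ∈ I, ∑ e ∈ M i with w ∈ e, lam i
      = ∑ e ∈ S with w ∈ e, ∑ i ∈ I with e ∈ M i, lam i := by
    refine sum_comm' fun i e => ?_
    simp only [mem_filter]
    exact ⟨fun ⟨hi, he, hw⟩ => ⟨⟨hi, he⟩, hMS i hi he, hw⟩,
      fun ⟨⟨hi, he⟩, _, hw⟩ => ⟨hi, he, hw⟩⟩
  have hload : ∑ e ∈ S with w ∈ e, ∑ i ∈ I with e ∈ M i, lam i
      = ∑ e : S, if w ∈ e.1 then y e else 0 := by
    rw [sum_filter, ← sum_coe_sort S]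
    refine sum_congr rfl fun e _ => ?_
    simp only [hy, sum_filter, mul_ite, mul_one, mul_zero]
  exact (sum_covering_le_sum_incident hlam w).trans (hcount.trans hload).le

theorem sum_incident_le_one_sub {S : Finset (Sym2 V)} {x xbar : S → ℝ} {e₀ : S}
    (hxbar : ∀ e ≠ e₀, xbar e = x e) (hxbar0 : xbar e₀ = 0) {w : V} (hw : w ∈ e₀.1)
    (hdeg : ∑ e : S, (if w ∈ e.1 then x e else 0) ≤ 1) :
    ∑ e : S, (if w ∈ e.1 then xbar e else 0) ≤ 1 - x e₀ := by
  have hdrop := sum_eq_sum_sub_of_eq_off (f := fun e : S => if w ∈ e.1 then x e else 0)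
    (g := fun e => if w ∈ e.1 then xbar e else 0) (a := e₀)
    (fun e he => by simp only [hxbar e he]) (by simp only [hxbar0, ite_self])
  simp only [hw, if_true] at hdrop
  linarith

end Sym2

theorem matching_blocked_fraction_bound_general
    {V : Type*} [Fintype V] [DecidableEq V]
    (G : SimpleGraph V) [DecidableRel G.Adj]
    (u v : V) (e₀ : {e : Sym2 V // e ∈ G.edgeFinset}) (he₀ : e₀.1 = s(u, v))
    (x : {e : Sym2 V // e ∈ G.edgeFinset} → ℝ)
    (hxdeg : ∀ w : V,
      ∑ e : {e : Sym2 V // e ∈ G.edgeFinset}, (if w ∈ e.1 then x e else 0) ≤ 1)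
    (xbar : {e : Sym2 V // e ∈ G.edgeFinset} → ℝ)
    (hxbar : ∀ e, e ≠ e₀ → xbar e = x e) (hxbar0 : xbar e₀ = 0)
    (α : ℝ) (hα0 : 0 < α)
    {ι : Type*} (I : Finset ι) (lam : ι → ℝ) (M : ι → Finset (Sym2 V))
    (hME : ∀ i ∈ I, M i ⊆ G.edgeFinset)
    (hlam0 : ∀ i ∈ I, 0 ≤ lam i)
    (hdecomp : ∀ e, α * xbar e = ∑ i ∈ I, lam i * (if e.1 ∈ M i then 1 else 0)) :
    ∑ i ∈ I.filter (fun i => (∃ e ∈ M i, u ∈ e) ∨ (∃ e ∈ M i, v ∈ e)), lam i ≤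
      2 * α * (1 - x e₀) := by
  have hcover : ∀ w ∈ e₀.1, ∑ i ∈ I with ∃ e ∈ M i, w ∈ e, lam i ≤ α * (1 - x e₀) := by
    intro w hw
    calc ∑ i ∈ I with ∃ e ∈ M i, w ∈ e, lam i
        ≤ ∑ e : {e // e ∈ G.edgeFinset}, if w ∈ e.1 then α * xbar e else 0 :=
          Sym2.sum_covering_le_load _ hME hlam0 hdecomp w
      _ = α * ∑ e : {e // e ∈ G.edgeFinset}, if w ∈ e.1 then xbar e else 0 := by
          simp only [mul_sum, mul_ite, mul_zero]
      _ ≤ α * (1 - x e₀) :=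
          mul_le_mul_of_nonneg_left (Sym2.sum_incident_le_one_sub hxbar hxbar0 hw (hxdeg w)) hα0.le
  calc _ ≤ ∑ i ∈ I with ∃ e ∈ M i, u ∈ e, lam i + ∑ i ∈ I with ∃ e ∈ M i, v ∈ e, lam i :=
        sum_filter_or_le hlam0 _ _
    _ ≤ α * (1 - x e₀) + α * (1 - x e₀) :=
        add_le_add (hcover u (by simp [he₀])) (hcover v (by simp [he₀]))
    _ = 2 * α * (1 - x e₀) := by ring

/-- **Blocked fraction bound for matching.** If `α·x̄` (where `x̄` zeroes out the
coordinate of `e₀ = uv` in a fractional matching `x`) is a convex combination of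
indicator vectors of matchings `M_i`, then the total weight of the matchings covering
`u` or `v` is at most `2α(1 − x_{e₀})`. -/
theorem matching_blocked_fraction_bound
    {V : Type*} [Fintype V] [DecidableEq V]
    (G : SimpleGraph V) [DecidableRel G.Adj]
    (u v : V) (e₀ : {e : Sym2 V // e ∈ G.edgeFinset}) (he₀ : e₀.1 = s(u, v))
    (x : {e : Sym2 V // e ∈ G.edgeFinset} → ℝ)
    (hx0 : ∀ e, 0 ≤ x e) (hx1 : ∀ e, x e ≤ 1)
    (hxdeg : ∀ w : V,
      ∑ e : {e : Sym2 V // e ∈ G.edgeFinset}, (if w ∈ e.1 then x e else 0) ≤ 1)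
    (xbar : {e : Sym2 V // e ∈ G.edgeFinset} → ℝ)
    (hxbar : ∀ e, e ≠ e₀ → xbar e = x e) (hxbar0 : xbar e₀ = 0)
    (α : ℝ) (hα0 : 0 < α) (hα1 : α ≤ 1)
    {ι : Type*} (I : Finset ι) (lam : ι → ℝ) (M : ι → Finset (Sym2 V))
    (hME : ∀ i ∈ I, M i ⊆ G.edgeFinset)
    (hMmatch : ∀ i ∈ I, ∀ e ∈ M i, ∀ f ∈ M i, e ≠ f → ∀ w : V, w ∈ e → w ∉ f)
    (hlam0 : ∀ i ∈ I, 0 ≤ lam i) (hlam1 : ∑ i ∈ I, lam i = 1)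
    (hdecomp : ∀ e, α * xbar e = ∑ i ∈ I, lam i * (if e.1 ∈ M i then 1 else 0)) :
    ∑ i ∈ I.filter (fun i => (∃ e ∈ M i, u ∈ e) ∨ (∃ e ∈ M i, v ∈ e)), lam i ≤
      2 * α * (1 - x e₀) :=
  matching_blocked_fraction_bound_general G u v e₀ he₀ x hxdeg xbar hxbar hxbar0 α hα0 I lam M hME
    hlam0 hdecomp
end

section
/- Let G = (V, E) be a finite simple graph, let x be a fractional matching of G, let e₀ ∈ E, and let x̄ : E → ℝ agree with x on E ∖ {e₀} and satisfy x̄_{e₀} = 0. Let α be a real number with 0 < α ≤ 1/(2 − x_{e₀}). If α·x̄ lies in the matching polytope of G, then α·x lies in the matching polytope of G. -/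
/-! Write `α x̄ = ∑ wᵢ χ(Mᵢ)` as a convex combination of matchings. At an endpoint of `e₀` the
degree of `α x̄` is at most `α (1 - x e₀)`, so the matchings meeting `e₀` weigh at most
`2α (1 - x e₀)` in total, and those avoiding `e₀` weigh at least `1 - 2α (1 - x e₀) ≥ α x e₀`
since `α (2 - x e₀) ≤ 1`. Adding `e₀` to an `α x e₀` share of the avoiding matchings keeps them
matchings and raises the `e₀`-coordinate from `0` to `α x e₀`, turning `α x̄` into `α x`. -/

open Finset

section ConvexCombination

variable {ι E : Type*} [Fintype ι] [AddCommGroup E] [Module ℝ E]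
  {w : ι → ℝ} {z : ι → E}

theorem add_smul_mem_convexHull_of_le_sum {s : Set E} (hw0 : ∀ i, 0 ≤ w i)
    (hw1 : ∑ i, w i = 1) (hz : ∀ i, z i ∈ s) {I : Finset ι} {d : E}
    (hI : ∀ i ∈ I, z i + d ∈ s) {β : ℝ} (hβ0 : 0 ≤ β) (hβ : β ≤ ∑ i ∈ I, w i) :
    ∑ i, w i • z i + β • d ∈ convexHull ℝ s := by
  classical
  set c := β / ∑ i ∈ I, w i
  have hc : c ∈ Set.Icc (0 : ℝ) 1 :=
    ⟨div_nonneg hβ0 (hβ0.trans hβ), div_le_one_of_le₀ hβ (hβ0.trans hβ)⟩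
  have hcβ : (∑ i ∈ I, w i) * c = β := by
    rcases (hβ0.trans hβ).eq_or_lt with hT | hT
    · rw [← hT, zero_mul]; exact le_antisymm hβ0 (hT ▸ hβ)
    · exact mul_div_cancel₀ β hT.ne'
  have hmem : ∀ i, (if i ∈ I then z i + c • d else z i) ∈ convexHull ℝ s := by
    intro i
    split_ifs with hi
    · exact (convex_convexHull ℝ s).add_smul_mem (subset_convexHull ℝ s (hz i))
        (subset_convexHull ℝ s (hI i hi)) hc
    · exact subset_convexHull ℝ s (hz i)
  convert (convex_convexHull ℝ s).sum_mem (fun i _ => hw0 i) hw1 fun i _ => hmem i using 1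
  simp only [smul_ite, smul_add, sum_ite, sum_add_distrib, ← sum_smul, smul_smul]
  rw [← sum_filter_add_sum_filter_not univ (· ∈ I), ← sum_mul, filter_mem_eq_inter, univ_inter,
    hcβ]
  abel

theorem sum_le_sum_add_map_sum_smul (hw0 : ∀ i, 0 ≤ w i) (L : E →ₗ[ℝ] ℝ)
    (hL0 : ∀ i, 0 ≤ L (z i)) {I : Finset ι} (hL1 : ∀ i ∉ I, 1 ≤ L (z i)) :
    ∑ i, w i ≤ ∑ i ∈ I, w i + L (∑ i, w i • z i) := by
  classical
  rw [← sum_add_sum_compl I, map_sum]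
  gcongr
  calc ∑ i ∈ Iᶜ, w i ≤ ∑ i ∈ Iᶜ, w i • L (z i) :=
        sum_le_sum fun i hi => le_mul_of_one_le_right (hw0 i) (hL1 i (mem_compl.mp hi))
    _ ≤ ∑ i, w i • L (z i) :=
        sum_le_sum_of_subset_of_nonneg (subset_univ _) fun i _ _ => mul_nonneg (hw0 i) (hL0 i)
    _ = ∑ i, L (w i • z i) := by simp only [map_smul]

end ConvexCombination

namespace MatchingPolytope

variable {V : Type*} [DecidableEq V] {E : Finset (Sym2 V)}

def IsMatching (M : Finset (Sym2 V)) : Prop :=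
  ∀ e ∈ M, ∀ f ∈ M, e ≠ f → ∀ w : V, w ∈ e → w ∉ f

variable (E) in
def indicator (M : Finset (Sym2 V)) : E → ℝ := fun e => if e.1 ∈ M then 1 else 0

variable (E) in
def vertices : Set (E → ℝ) := {χ | ∃ M ⊆ E, IsMatching M ∧ χ = indicator E M}

def degreeAt (a : V) : (E → ℝ) →ₗ[ℝ] ℝ where
  toFun y := ∑ e, if a ∈ e.1 then y e else 0
  map_add' y z := by simp only [Pi.add_apply, ← sum_add_distrib, ite_add_ite, add_zero]
  map_smul' c y := by simp only [Pi.smul_apply, smul_eq_mul, mul_sum, mul_ite, mul_zero,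
    RingHom.id_apply]

theorem degreeAt_apply (a : V) (y : E → ℝ) :
    degreeAt a y = ∑ e, if a ∈ e.1 then y e else 0 := rfl

theorem degreeAt_indicator_nonneg (a : V) (M : Finset (Sym2 V)) :
    0 ≤ degreeAt a (indicator E M) :=
  sum_nonneg fun e _ => by unfold indicator; split_ifs <;> norm_num

theorem one_le_degreeAt_indicator {a : V} {M : Finset (Sym2 V)} {f : E} (hf : f.1 ∈ M)
    (ha : a ∈ f.1) : 1 ≤ degreeAt a (indicator E M) := by
  calc (1 : ℝ) = if a ∈ f.1 then indicator E M f else 0 := by simp [indicator, hf, ha]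
    _ ≤ degreeAt a (indicator E M) :=
      single_le_sum (f := fun e : E => if a ∈ e.1 then indicator E M e else 0)
        (fun e _ => by unfold indicator; split_ifs <;> norm_num) (mem_univ f)

theorem degreeAt_indicator_singleton {a : V} {e₀ : E} (ha : a ∈ e₀.1) :
    degreeAt a (indicator E {e₀.1}) = 1 := by
  rw [degreeAt_apply, sum_eq_single e₀]
  · simp [indicator, ha]
  · intro e _ he
    simp [indicator, he]
  · simp

theorem IsMatching.insert {M : Finset (Sym2 V)} (hM : IsMatching M) {e : Sym2 V}
    (he : ∀ f ∈ M, ∀ a ∈ e, a ∉ f) : IsMatching (insert e M) := by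
  intro f hf g hg hfg a haf
  rcases mem_insert.mp hf with rfl | hfM <;> rcases mem_insert.mp hg with rfl | hgM
  · exact absurd rfl hfg
  · exact he g hgM a haf
  · exact fun hag => he f hfM a hag haf
  · exact hM f hfM g hgM hfg a haf

theorem indicator_insert {M : Finset (Sym2 V)} {e : Sym2 V} (he : e ∉ M) :
    indicator E (insert e M) = indicator E M + indicator E {e} := by
  funext f
  by_cases hf : f.1 = e
  · simp [indicator, hf, he]
  · simp [indicator, hf]

theorem indicator_add_indicator_mem_vertices {M : Finset (Sym2 V)} (hME : M ⊆ E)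
    (hM : IsMatching M) {e₀ : E} (he₀ : ∀ f ∈ M, ∀ a ∈ e₀.1, a ∉ f) :
    indicator E M + indicator E {e₀.1} ∈ vertices E := by
  have hnotin : e₀.1 ∉ M := fun h => he₀ _ h _ e₀.1.out_fst_mem e₀.1.out_fst_mem
  exact ⟨insert e₀.1 M, insert_subset e₀.2 hME, hM.insert he₀, (indicator_insert hnotin).symm⟩

theorem eq_add_smul_indicator_singleton {x xbar : E → ℝ} {e₀ : E}
    (hxbar : ∀ e, e ≠ e₀ → xbar e = x e) (hxbar0 : xbar e₀ = 0) :
    x = xbar + x e₀ • indicator E {e₀.1} := by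
  funext e
  by_cases he : e = e₀
  · simp [he, hxbar0, indicator]
  · simp [hxbar e he, indicator, Subtype.ext_iff.not.mp he]

theorem one_le_degreeAt_add_degreeAt_indicator {M : Finset (Sym2 V)} (hME : M ⊆ E)
    {f : Sym2 V} (hf : f ∈ M) {u v a : V} (ha : a ∈ s(u, v)) (haf : a ∈ f) :
    1 ≤ degreeAt u (indicator E M) + degreeAt v (indicator E M) := by
  have hcover := one_le_degreeAt_indicator (f := ⟨f, hME hf⟩) hf haf
  rcases Sym2.mem_iff.mp ha with rfl | rfl
  · linarith [degreeAt_indicator_nonneg v M (E := E)]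
  · linarith [degreeAt_indicator_nonneg u M (E := E)]

theorem add_smul_indicator_mem_convexHull {y : E → ℝ} (hy : y ∈ convexHull ℝ (vertices E))
    {e₀ : E} {u v : V} (huv : e₀.1 = s(u, v)) {β : ℝ} (hβ0 : 0 ≤ β)
    (hβ : β ≤ 1 - (degreeAt u y + degreeAt v y)) :
    y + β • indicator E {e₀.1} ∈ convexHull ℝ (vertices E) := by
  classical
  obtain ⟨ι, _, w, z, hw0, hw1, hz, rfl⟩ := mem_convexHull_iff_exists_fintype.mp hy
  choose M hME hM hzM using hz
  set avoiding := univ.filter fun i => ∀ f ∈ M i, ∀ a ∈ e₀.1, a ∉ f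
  have hweight := sum_le_sum_add_map_sum_smul hw0 (degreeAt u + degreeAt v) (z := z)
    (I := avoiding)
    (fun i => by
      rw [hzM i]; exact add_nonneg (degreeAt_indicator_nonneg u _) (degreeAt_indicator_nonneg v _))
    (fun i hi => by
      simp only [avoiding, mem_filter, mem_univ, true_and, not_forall, not_not, huv] at hi
      obtain ⟨f, hf, a, ha, haf⟩ := hi
      rw [hzM i, LinearMap.add_apply]
      exact one_le_degreeAt_add_degreeAt_indicator (hME i) hf ha haf)
  rw [hw1, LinearMap.add_apply] at hweight
  refine add_smul_mem_convexHull_of_le_sum (s := vertices E) hw0 hw1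
    (fun i => ⟨M i, hME i, hM i, hzM i⟩) (fun i hi => ?_) hβ0 (by linarith)
  rw [hzM i]
  exact indicator_add_indicator_mem_vertices (hME i) (hM i) (mem_filter.mp hi).2

end MatchingPolytope

open MatchingPolytope

theorem matching_iterative_packing_step_general
    {V : Type*} [Fintype V] [DecidableEq V]
    (G : SimpleGraph V) [DecidableRel G.Adj]
    (x : {e : Sym2 V // e ∈ G.edgeFinset} → ℝ)
    (hx0 : ∀ e, 0 ≤ x e)
    (hxdeg : ∀ w : V,
      ∑ e : {e : Sym2 V // e ∈ G.edgeFinset}, (if w ∈ e.1 then x e else 0) ≤ 1)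
    (e₀ : {e : Sym2 V // e ∈ G.edgeFinset})
    (xbar : {e : Sym2 V // e ∈ G.edgeFinset} → ℝ)
    (hxbar : ∀ e, e ≠ e₀ → xbar e = x e) (hxbar0 : xbar e₀ = 0)
    (α : ℝ) (hα0 : 0 < α) (hα1 : α ≤ 1 / (2 - x e₀))
    (hhull : (fun e => α * xbar e) ∈
      convexHull ℝ {χ : {e : Sym2 V // e ∈ G.edgeFinset} → ℝ |
        ∃ M : Finset (Sym2 V), M ⊆ G.edgeFinset ∧
          (∀ e ∈ M, ∀ f ∈ M, e ≠ f → ∀ w : V, w ∈ e → w ∉ f) ∧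
          χ = fun e => if e.1 ∈ M then 1 else 0}) :
    (fun e => α * x e) ∈
      convexHull ℝ {χ : {e : Sym2 V // e ∈ G.edgeFinset} → ℝ |
        ∃ M : Finset (Sym2 V), M ⊆ G.edgeFinset ∧
          (∀ e ∈ M, ∀ f ∈ M, e ≠ f → ∀ w : V, w ∈ e → w ∉ f) ∧
          χ = fun e => if e.1 ∈ M then 1 else 0} := by
  have hy : α • xbar ∈ convexHull ℝ (vertices G.edgeFinset) := hhull
  have hsplit := eq_add_smul_indicator_singleton hxbar hxbar0
  have hdeg : ∀ a ∈ e₀.1, degreeAt a (α • xbar) ≤ α * (1 - x e₀) := fun a ha => by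
    have hxa : degreeAt a x ≤ 1 := hxdeg a
    rw [hsplit, map_add, map_smul, degreeAt_indicator_singleton ha, smul_eq_mul, mul_one] at hxa
    rw [map_smul, smul_eq_mul]
    exact mul_le_mul_of_nonneg_left (by linarith) hα0.le
  have hα2 : α * (2 - x e₀) ≤ 1 :=
    (le_div_iff₀ (one_div_pos.mp (hα0.trans_le hα1))).mp hα1
  obtain ⟨u, v, huv⟩ : ∃ u v, e₀.1 = s(u, v) := Sym2.ind (fun a b => ⟨a, b, rfl⟩) e₀.1
  show α • x ∈ convexHull ℝ (vertices G.edgeFinset)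
  rw [hsplit, smul_add, smul_smul]
  refine add_smul_indicator_mem_convexHull hy huv (mul_nonneg hα0.le (hx0 e₀)) ?_
  linarith [hdeg u (huv ▸ Sym2.mem_mk_left u v), hdeg v (huv ▸ Sym2.mem_mk_right u v)]

/-- **Iterative packing step for matching.** Let `x` be a fractional matching, `e₀` an
edge, and `x̄` the vector zeroing out the coordinate of `e₀`. If `0 < α ≤ 1/(2 − x_{e₀})`
and `α·x̄` lies in the matching polytope, then `α·x` lies in the matching polytope. -/
theorem matching_iterative_packing_step
    {V : Type*} [Fintype V] [DecidableEq V]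
    (G : SimpleGraph V) [DecidableRel G.Adj]
    (x : {e : Sym2 V // e ∈ G.edgeFinset} → ℝ)
    (hx0 : ∀ e, 0 ≤ x e) (hx1 : ∀ e, x e ≤ 1)
    (hxdeg : ∀ w : V,
      ∑ e : {e : Sym2 V // e ∈ G.edgeFinset}, (if w ∈ e.1 then x e else 0) ≤ 1)
    (e₀ : {e : Sym2 V // e ∈ G.edgeFinset})
    (xbar : {e : Sym2 V // e ∈ G.edgeFinset} → ℝ)
    (hxbar : ∀ e, e ≠ e₀ → xbar e = x e) (hxbar0 : xbar e₀ = 0)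
    (α : ℝ) (hα0 : 0 < α) (hα1 : α ≤ 1 / (2 - x e₀))
    (hhull : (fun e => α * xbar e) ∈
      convexHull ℝ {χ : {e : Sym2 V // e ∈ G.edgeFinset} → ℝ |
        ∃ M : Finset (Sym2 V), M ⊆ G.edgeFinset ∧
          (∀ e ∈ M, ∀ f ∈ M, e ≠ f → ∀ w : V, w ∈ e → w ∉ f) ∧
          χ = fun e => if e.1 ∈ M then 1 else 0}) :
    (fun e => α * x e) ∈
      convexHull ℝ {χ : {e : Sym2 V // e ∈ G.edgeFinset} → ℝ |
        ∃ M : Finset (Sym2 V), M ⊆ G.edgeFinset ∧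
          (∀ e ∈ M, ∀ f ∈ M, e ≠ f → ∀ w : V, w ∈ e → w ∉ f) ∧
          χ = fun e => if e.1 ∈ M then 1 else 0} :=
  matching_iterative_packing_step_general G x hx0 hxdeg e₀ xbar hxbar hxbar0 α hα0 hα1 hhull
end
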